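/- For every n ∈ ℤ and every β ∈ (−π, π], the Cauchy principal value (1/π) lim_{ε→0⁺} ∫_{{α ∈ (−π,π] : dist(α, β mod 2π) > ε}} e^{inα}/(e^{iα} − e^{iβ}) dα exists and equals e^{i(n−1)β} if n ≥ 1, and −e^{i(n−1)β} if n ≤ 0. -/

import Mathlib

open MeasureTheory Filter Set

noncomputable section

/-- The distance from `x` to `y` modulo `2π` (distance on the circle `ℝ/2πℤ`). -/
def circDist (x y : ℝ) : ℝ := ⨅ m : ℤ, |x - y + 2 * Real.pi * (m : ℝ)|

/-- The set `{α ∈ (-π, π] : dist(α, β mod 2π) > ε}`. -/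
def pvSet (β ε : ℝ) : Set ℝ := {α : ℝ | α ∈ Ioc (-Real.pi) Real.pi ∧ ε < circDist α β}

/-!
Translating by `β` and using `2π`-periodicity, the integral over `pvSet β ε` equals
`e^{i(n-1)β}` times the integral of `k_n(θ) = e^{inθ}/(e^{iθ} - 1)` over `ε ≤ |θ| ≤ π`.
For `n = 0` the identity `k_0(θ) + k_0(-θ) = -1` makes this truncated integral exactly `ε - π`.
Since `k_{n+1} = k_n + e^{inθ}` and the truncated integral of the continuous function `e^{inθ}`
tends to `∫_{-π}^{π} e^{inθ} dθ = 2π [n = 0]`, induction on `n` gives the limit `-π` for `n ≤ 0`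
and `π` for `n ≥ 1`.
-/

open Function Topology intervalIntegral
open scoped Real Complex
open Complex (I)

lemma circDist_add_two_pi (x y : ℝ) : circDist (x + 2 * π) y = circDist x y := by
  unfold circDist
  rw [← (Equiv.subRight (1 : ℤ)).iInf_comp]
  congr! 2 with m
  rw [Equiv.subRight_apply, Int.cast_sub, Int.cast_one]
  ring_nf

lemma measurable_circDist (y : ℝ) : Measurable (circDist · y) :=
  Measurable.iInf fun _ => (measurable_id.sub_const _ |>.add_const _).abs

lemma circDist_add_self_eq_abs {θ : ℝ} (hθ : |θ| ≤ π) (y : ℝ) : circDist (θ + y) y = |θ| := by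
  unfold circDist
  simp only [add_sub_cancel_right]
  refine le_antisymm ((ciInf_le ⟨0, ?_⟩ 0).trans_eq (by simp)) (le_ciInf fun m => ?_)
  · rintro _ ⟨m, rfl⟩
    positivity
  rcases eq_or_ne m 0 with rfl | hm
  · simp
  have hm : 2 * π ≤ |2 * π * m| := by
    rw [abs_mul, abs_of_pos Real.two_pi_pos]
    exact le_mul_of_one_le_right Real.two_pi_pos.le (by exact_mod_cast Int.one_le_abs hm)
  have := abs_sub_abs_le_abs_sub (2 * π * m) (-θ)
  rw [abs_neg, sub_neg_eq_add, add_comm] at this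
  linarith

def truncationDomain (ε : ℝ) : Set ℝ := {θ | ε ≤ |θ| ∧ |θ| ≤ π}

lemma uIcc_subset_truncationDomain {ε : ℝ} (hε : 0 ≤ ε) (hεπ : ε ≤ π) :
    uIcc (-π) (-ε) ⊆ truncationDomain ε ∧ uIcc ε π ⊆ truncationDomain ε := by
  rw [uIcc_of_le (by linarith), uIcc_of_le hεπ]
  constructor
  · rintro θ ⟨h₁, h₂⟩
    exact ⟨le_abs.2 (Or.inr (by linarith)), abs_le.2 ⟨h₁, by linarith⟩⟩
  · rintro θ ⟨h₁, h₂⟩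
    exact ⟨le_abs.2 (Or.inl h₁), abs_le.2 ⟨by linarith, h₂⟩⟩

section Truncated

variable {E : Type*} [NormedAddCommGroup E] {f g : ℝ → E} {ε : ℝ}

lemma intervalIntegrable_of_continuousOn_truncationDomain (hε : 0 ≤ ε) (hεπ : ε ≤ π)
    (hf : ContinuousOn f (truncationDomain ε)) :
    IntervalIntegrable f volume (-π) (-ε) ∧ IntervalIntegrable f volume ε π :=
  ⟨(hf.mono (uIcc_subset_truncationDomain hε hεπ).1).intervalIntegrable,
    (hf.mono (uIcc_subset_truncationDomain hε hεπ).2).intervalIntegrable⟩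

variable [NormedSpace ℝ E]

def truncatedIntegral (f : ℝ → E) (ε : ℝ) : E := (∫ θ in -π..-ε, f θ) + ∫ θ in ε..π, f θ

lemma truncatedIntegral_congr (hε : 0 ≤ ε) (hεπ : ε ≤ π) (h : EqOn f g (truncationDomain ε)) :
    truncatedIntegral f ε = truncatedIntegral g ε := by
  obtain ⟨h₁, h₂⟩ := uIcc_subset_truncationDomain hε hεπ
  rw [truncatedIntegral, truncatedIntegral, integral_congr (h.mono h₁), integral_congr (h.mono h₂)]

lemma truncatedIntegral_add (hε : 0 ≤ ε) (hεπ : ε ≤ π)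
    (hf : ContinuousOn f (truncationDomain ε)) (hg : ContinuousOn g (truncationDomain ε)) :
    truncatedIntegral (fun θ => f θ + g θ) ε = truncatedIntegral f ε + truncatedIntegral g ε := by
  obtain ⟨hf₁, hf₂⟩ := intervalIntegrable_of_continuousOn_truncationDomain hε hεπ hf
  obtain ⟨hg₁, hg₂⟩ := intervalIntegrable_of_continuousOn_truncationDomain hε hεπ hg
  rw [truncatedIntegral, integral_add hf₁ hg₁, integral_add hf₂ hg₂, truncatedIntegral,
    truncatedIntegral]
  abel

lemma tendsto_truncatedIntegral (hf : Continuous f) :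
    Tendsto (truncatedIntegral f) (𝓝 0) (𝓝 (∫ θ in -π..π, f θ)) := by
  have hint : ∀ a b, IntervalIntegrable f volume a b := hf.intervalIntegrable
  have hcont : Continuous (truncatedIntegral f) := by
    have hprim := fun a => intervalIntegral.continuous_primitive hint a
    have : truncatedIntegral f = fun ε => (∫ θ in -π..-ε, f θ) - ∫ θ in π..ε, f θ := by
      funext ε
      rw [truncatedIntegral, integral_symm ε π, sub_neg_eq_add]
    rw [this]
    exact ((hprim _).comp continuous_neg).sub (hprim _)
  simpa [truncatedIntegral, integral_add_adjacent_intervals (hint _ _) (hint _ _)]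
    using hcont.tendsto 0

lemma intervalIntegral_indicator_lt_abs {a : ℝ} (hε : 0 ≤ ε) (hεa : ε ≤ a)
    (h₁ : IntervalIntegrable f volume (-a) (-ε)) (h₂ : IntervalIntegrable f volume ε a) :
    ∫ θ in -a..a, {θ | ε < |θ|}.indicator f θ = (∫ θ in -a..-ε, f θ) + ∫ θ in ε..a, f θ := by
  have hset : Ioc (-a) a ∩ {θ | ε < |θ|} = Ioo (-a) (-ε) ∪ Ioc ε a := by
    ext θ
    simp only [mem_inter_iff, mem_Ioc, mem_ofPred_eq, mem_union, mem_Ioo, lt_abs]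
    constructor
    · rintro ⟨⟨h, h'⟩, hθ | hθ⟩
      · exact Or.inr ⟨hθ, h'⟩
      · exact Or.inl ⟨h, by linarith⟩
    · rintro (⟨h, h'⟩ | ⟨h, h'⟩)
      · exact ⟨⟨h, by linarith⟩, Or.inr (by linarith)⟩
      · exact ⟨⟨by linarith, h'⟩, Or.inl h⟩
  have hdisj : Disjoint (Ioo (-a) (-ε)) (Ioc ε a) :=
    disjoint_left.2 fun θ h h' => by linarith [h.2, h'.1]
  rw [integral_of_le (by linarith), integral_of_le (neg_le_neg hεa), integral_of_le hεa,
    setIntegral_indicator (measurableSet_lt measurable_const continuous_abs.measurable), hset,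
    setIntegral_union hdisj measurableSet_Ioc (h₁.1.mono_set Ioo_subset_Ioc_self) h₂.1,
    integral_Ioc_eq_integral_Ioo (x := -a)]

lemma setIntegral_pvSet {F : ℝ → E} (hF : Periodic F (2 * π)) (β : ℝ)
    (hε : 0 ≤ ε) (hεπ : ε ≤ π)
    (h₁ : IntervalIntegrable (fun θ => F (θ + β)) volume (-π) (-ε))
    (h₂ : IntervalIntegrable (fun θ => F (θ + β)) volume ε π) :
    ∫ α in pvSet β ε, F α = truncatedIntegral (fun θ => F (θ + β)) ε := by
  set D := {α | ε < circDist α β}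
  have hD : MeasurableSet D := measurableSet_lt measurable_const (measurable_circDist β)
  -- cutting out `D` keeps `F` periodic, so the window `(-π, π]` can be recentred at `β`
  have hG : Periodic (D.indicator F) (2 * π) := fun α => by
    simp only [indicator, D, mem_ofPred_eq, circDist_add_two_pi, hF α]
  calc ∫ α in pvSet β ε, F α = ∫ α in -π..-π + 2 * π, D.indicator F α := by
        rw [show -π + 2 * π = π by ring, integral_of_le (by linarith),
          setIntegral_indicator hD]
        rfl
    _ = ∫ α in β - π..β - π + 2 * π, D.indicator F α := hG.intervalIntegral_add_eq _ _
    _ = ∫ θ in -π..π, D.indicator F (θ + β) := by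
        rw [integral_comp_add_right]
        congr 1 <;> ring
    _ = ∫ θ in -π..π, {θ | ε < |θ|}.indicator (fun θ => F (θ + β)) θ := by
        refine integral_congr fun θ hθ => ?_
        rw [uIcc_of_le (by linarith)] at hθ
        simp only [indicator, D, mem_ofPred_eq, circDist_add_self_eq_abs (abs_le.2 hθ)]
    _ = _ := intervalIntegral_indicator_lt_abs hε hεπ h₁ h₂

end Truncated

lemma cexp_I_mul_ne_one {θ : ℝ} (h0 : θ ≠ 0) (hθ : |θ| < 2 * π) : cexp (I * θ) ≠ 1 := by
  intro h
  have hre := congrArg Complex.re h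
  rw [mul_comm, Complex.exp_ofReal_mul_I_re, Complex.one_re] at hre
  exact h0 ((Real.cos_eq_one_iff_of_lt_of_lt (by linarith [neg_abs_le θ])
    (by linarith [le_abs_self θ])).1 hre)

lemma cexp_I_mul_ne_one_of_mem_truncationDomain {ε θ : ℝ} (hε : 0 < ε)
    (hθ : θ ∈ truncationDomain ε) : cexp (I * θ) ≠ 1 :=
  cexp_I_mul_ne_one (abs_pos.1 (hε.trans_le hθ.1)) (hθ.2.trans_lt (by linarith [Real.pi_pos]))

lemma cexp_I_mul_int_mul (n : ℤ) (x : ℝ) : cexp (I * n * x) = cexp (I * x) ^ n := by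
  rw [← Complex.exp_int_mul]
  ring_nf

lemma cexp_I_mul_periodic : Periodic (fun x : ℝ => cexp (I * x)) (2 * π) := fun x => by
  simpa [mul_comm I] using Complex.exp_mul_I_periodic x

lemma integral_cexp_I_int_mul (k : ℤ) :
    ∫ θ in -π..π, cexp (I * k * θ) = if k = 0 then 2 * (π : ℂ) else 0 := by
  split_ifs with hk
  · subst hk
    simp only [Int.cast_zero, mul_zero, zero_mul, Complex.exp_zero, intervalIntegral.integral_const,
      sub_neg_eq_add, Complex.real_smul, Complex.ofReal_add, mul_one]
    ring
  · have hc : I * k ≠ 0 := mul_ne_zero Complex.I_ne_zero (Int.cast_ne_zero.2 hk)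
    have hπ : cexp (I * π) = cexp (I * (-π : ℝ)) := by
      simpa [show -π + 2 * π = π by ring] using cexp_I_mul_periodic (-π)
    rw [integral_exp_mul_complex hc, cexp_I_mul_int_mul, cexp_I_mul_int_mul, hπ, sub_self,
      zero_div]

lemma tendsto_truncatedIntegral_cexp_I_int_mul (k : ℤ) :
    Tendsto (truncatedIntegral fun θ => cexp (I * k * θ)) (𝓝 0)
      (𝓝 (if k = 0 then 2 * (π : ℂ) else 0)) := by
  rw [← integral_cexp_I_int_mul]
  exact tendsto_truncatedIntegral (by fun_prop)

def pvKernel (n : ℤ) (β α : ℝ) : ℂ := cexp (I * n * α) / (cexp (I * α) - cexp (I * β))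

lemma pvKernel_eq (n : ℤ) (β α : ℝ) :
    pvKernel n β α = cexp (I * α) ^ n / (cexp (I * α) - cexp (I * β)) := by
  rw [pvKernel, cexp_I_mul_int_mul]

lemma pvKernel_periodic (n : ℤ) (β : ℝ) : Periodic (pvKernel n β) (2 * π) := fun α => by
  simp only [pvKernel_eq, cexp_I_mul_periodic α]

lemma pvKernel_add_right (n : ℤ) (β θ : ℝ) :
    pvKernel n β (θ + β) = cexp (I * (n - 1) * β) * pvKernel n 0 θ := by
  have hβ := Complex.exp_ne_zero (I * β)
  rw [pvKernel_eq, pvKernel_eq,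
    show I * (n - 1) * β = I * ((n - 1 : ℤ) : ℂ) * β by push_cast; ring,
    cexp_I_mul_int_mul, Complex.ofReal_add, mul_add, Complex.exp_add, mul_zpow,
    zpow_sub_one₀ hβ, Complex.ofReal_zero, mul_zero, Complex.exp_zero,
    show cexp (I * θ) * cexp (I * β) - cexp (I * β) = (cexp (I * θ) - 1) * cexp (I * β) by ring]
  field_simp

lemma pvKernel_succ {θ : ℝ} (h : cexp (I * θ) ≠ 1) (n : ℤ) :
    pvKernel (n + 1) 0 θ = pvKernel n 0 θ + cexp (I * n * θ) := by
  have hu := Complex.exp_ne_zero (I * θ)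
  have h1 : cexp (I * θ) - 1 ≠ 0 := sub_ne_zero.2 h
  simp only [pvKernel_eq, cexp_I_mul_int_mul, zpow_add_one₀ hu, Complex.ofReal_zero, mul_zero,
    Complex.exp_zero]
  field_simp
  ring

lemma pvKernel_zero_add_pvKernel_zero_neg {θ : ℝ} (h : cexp (I * θ) ≠ 1) :
    pvKernel 0 0 θ + pvKernel 0 0 (-θ) = -1 := by
  have hu := Complex.exp_ne_zero (I * θ)
  have h1 : cexp (I * θ) - 1 ≠ 0 := sub_ne_zero.2 h
  have h2 : (cexp (I * θ))⁻¹ - 1 ≠ 0 := sub_ne_zero.2 (inv_ne_one.2 h)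
  simp only [pvKernel_eq, zpow_zero, Complex.ofReal_neg, mul_neg, Complex.exp_neg,
    Complex.ofReal_zero, mul_zero, Complex.exp_zero] at h2 ⊢
  field_simp
  ring

lemma continuousOn_pvKernel (n : ℤ) (β : ℝ) :
    ContinuousOn (pvKernel n β) {α | cexp (I * α) ≠ cexp (I * β)} :=
  ContinuousOn.div (by fun_prop) (by fun_prop) fun _ hα => sub_ne_zero.2 hα

lemma continuousOn_pvKernel_zero (n : ℤ) {ε : ℝ} (hε : 0 < ε) :
    ContinuousOn (pvKernel n 0) (truncationDomain ε) :=
  (continuousOn_pvKernel n 0).mono fun θ hθ => by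
    simpa using cexp_I_mul_ne_one_of_mem_truncationDomain hε hθ

lemma truncatedIntegral_pvKernel_zero {ε : ℝ} (hε : 0 < ε) (hεπ : ε ≤ π) :
    truncatedIntegral (pvKernel 0 0) ε = ε - π := by
  have hint := (intervalIntegrable_of_continuousOn_truncationDomain hε.le hεπ
    (continuousOn_pvKernel_zero 0 hε)).2
  have hsymm : ∫ θ in -π..-ε, pvKernel 0 0 θ = ∫ θ in ε..π, (-1 - pvKernel 0 0 θ) := by
    rw [← integral_comp_neg]
    refine integral_congr fun θ hθ => ?_
    have := pvKernel_zero_add_pvKernel_zero_neg (cexp_I_mul_ne_one_of_mem_truncationDomain hε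
      ((uIcc_subset_truncationDomain hε.le hεπ).2 hθ))
    linear_combination this
  rw [truncatedIntegral, hsymm, integral_sub intervalIntegrable_const hint, sub_add_cancel,
    intervalIntegral.integral_const]
  simp

lemma truncatedIntegral_pvKernel_succ (n : ℤ) {ε : ℝ} (hε : 0 < ε) (hεπ : ε ≤ π) :
    truncatedIntegral (pvKernel (n + 1) 0) ε
      = truncatedIntegral (pvKernel n 0) ε + truncatedIntegral (fun θ => cexp (I * n * θ)) ε := by
  rw [truncatedIntegral_congr hε.le hεπ
    fun θ hθ => pvKernel_succ (cexp_I_mul_ne_one_of_mem_truncationDomain hε hθ) n]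
  exact truncatedIntegral_add hε.le hεπ (continuousOn_pvKernel_zero n hε) (by fun_prop)

lemma tendsto_truncatedIntegral_pvKernel (n : ℤ) :
    Tendsto (truncatedIntegral (pvKernel n 0)) (𝓝[>] 0) (𝓝 (if 1 ≤ n then (π : ℂ) else -π)) := by
  have hev : ∀ᶠ ε in 𝓝[>] (0 : ℝ), 0 < ε ∧ ε ≤ π := Ioc_mem_nhdsGT Real.pi_pos
  have hstep (k : ℤ) :
      Tendsto (truncatedIntegral (pvKernel (k + 1) 0)) (𝓝[>] 0)
          (𝓝 (if 1 ≤ k + 1 then (π : ℂ) else -π)) ↔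
        Tendsto (truncatedIntegral (pvKernel k 0)) (𝓝[>] 0)
          (𝓝 (if 1 ≤ k then (π : ℂ) else -π)) := by
    have hsucc : truncatedIntegral (pvKernel (k + 1) 0) =ᶠ[𝓝[>] 0]
        truncatedIntegral (pvKernel k 0) + truncatedIntegral fun θ => cexp (I * k * θ) :=
      hev.mono fun ε hε => truncatedIntegral_pvKernel_succ k hε.1 hε.2
    have hval : (if 1 ≤ k + 1 then (π : ℂ) else -π)
        = (if 1 ≤ k then (π : ℂ) else -π) + if k = 0 then 2 * (π : ℂ) else 0 := by
      split_ifs <;> first | omega | ring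
    have hexp := (tendsto_truncatedIntegral_cexp_I_int_mul k).mono_left
      (nhdsWithin_le_nhds (s := Ioi 0))
    rw [tendsto_congr' hsucc, hval]
    exact ⟨fun h => by simpa using h.sub hexp, fun h => h.add hexp⟩
  induction n using Int.induction_on with
  | zero =>
    have hbase : Tendsto (fun ε : ℝ => (ε : ℂ) - π) (𝓝[>] 0) (𝓝 (-π)) := by
      refine ((Complex.continuous_ofReal.sub continuous_const).tendsto' (0 : ℝ) _ ?_).mono_left
        nhdsWithin_le_nhds
      simp
    simpa using hbase.congr'
      (hev.mono fun ε hε => (truncatedIntegral_pvKernel_zero hε.1 hε.2).symm)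
  | succ i ih => exact (hstep i).2 ih
  | pred i ih => exact (hstep (-i - 1)).1 (by simpa using ih)

lemma setIntegral_pvSet_pvKernel (n : ℤ) (β : ℝ) {ε : ℝ} (hε : 0 < ε) (hεπ : ε ≤ π) :
    ∫ α in pvSet β ε, pvKernel n β α
      = cexp (I * (n - 1) * β) * truncatedIntegral (pvKernel n 0) ε := by
  obtain ⟨h₁, h₂⟩ := intervalIntegrable_of_continuousOn_truncationDomain hε.le hεπ
    (continuousOn_pvKernel_zero n hε)
  rw [setIntegral_pvSet (pvKernel_periodic n β) β hε.le hεπ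
    (by simpa only [pvKernel_add_right] using h₁.const_mul _)
    (by simpa only [pvKernel_add_right] using h₂.const_mul _)]
  simp only [truncatedIntegral, pvKernel_add_right, intervalIntegral.integral_const_mul, mul_add]

theorem stmt12_general (n : ℤ) (β : ℝ) :
    Tendsto (fun ε : ℝ =>
        (1 / (Real.pi : ℂ)) * ∫ α in pvSet β ε,
          Complex.exp (Complex.I * (n : ℂ) * (α : ℂ)) /
            (Complex.exp (Complex.I * (α : ℂ)) - Complex.exp (Complex.I * (β : ℂ))))
      (nhdsWithin 0 (Ioi 0))
      (nhds (if 1 ≤ n then Complex.exp (Complex.I * ((n : ℂ) - 1) * (β : ℂ))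
        else -Complex.exp (Complex.I * ((n : ℂ) - 1) * (β : ℂ)))) := by
  have hπ : (π : ℂ) ≠ 0 := Complex.ofReal_ne_zero.2 Real.pi_ne_zero
  have hlim := ((tendsto_truncatedIntegral_pvKernel n).const_mul
    (cexp (I * (n - 1) * β))).const_mul (1 / π : ℂ)
  rw [show (1 / π : ℂ) * (cexp (I * (n - 1) * β) * if 1 ≤ n then (π : ℂ) else -π)
      = if 1 ≤ n then cexp (I * (n - 1) * β) else -cexp (I * (n - 1) * β) by
    split_ifs <;> field_simp] at hlim
  refine hlim.congr' (eventually_of_mem (Ioc_mem_nhdsGT Real.pi_pos) fun ε hε => ?_)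
  rw [← setIntegral_pvSet_pvKernel n β hε.1 hε.2]
  rfl

/-- Lemma A.3: `(1/π) p.v. ∫_{-π}^{π} e^{inα}/(e^{iα} - e^{iβ}) dα = ± e^{i(n-1)β}`,
with sign `+` for `n ≥ 1` and `-` for `n ≤ 0`. -/
theorem stmt12 (n : ℤ) (β : ℝ) (hβ : β ∈ Ioc (-Real.pi) Real.pi) :
    Tendsto (fun ε : ℝ =>
        (1 / (Real.pi : ℂ)) * ∫ α in pvSet β ε,
          Complex.exp (Complex.I * (n : ℂ) * (α : ℂ)) /
            (Complex.exp (Complex.I * (α : ℂ)) - Complex.exp (Complex.I * (β : ℂ))))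
      (nhdsWithin 0 (Ioi 0))
      (nhds (if 1 ≤ n then Complex.exp (Complex.I * ((n : ℂ) - 1) * (β : ℂ))
        else -Complex.exp (Complex.I * ((n : ℂ) - 1) * (β : ℂ)))) :=
  stmt12_general n β
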